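/- Let w ∈ S_+ and i be such that Φ_i(w) = {w t_{i,j} : ℓ(w t_{i,j}) = ℓ(w)+1, j ∈ φ_i(w)} is nonempty. Then the Bruhat interval [w, ∨Φ_i(w)] equals {w} ∪ {w_{U,i} : ∅ ≠ U ⊆ φ_i(w)}, where ∨Φ_i(w) is the join of Φ_i(w). -/

import Mathlib

/-- Finitely supported permutations of `ℕ`: these model the group `S_+` of
permutations of the positive integers fixing all but finitely many points
(relabelled 0-based). -/
def fsupp (w : Equiv.Perm ℕ) : Prop := Set.Finite {x : ℕ | w x ≠ x}

/-- Coxeter length of a (finitely supported) permutation of `ℕ`: the number of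
inversions. -/
noncomputable def lenN (w : Equiv.Perm ℕ) : ℕ :=
  Set.ncard {p : ℕ × ℕ | p.1 < p.2 ∧ w p.2 < w p.1}

/-- `(a, w a)` is a neighbor of `(i, w i)` in the graph of `w`:
`i ≤ a`, `w i ≤ w a`, `(a, w a) ≠ (i, w i)`, and no other point of the graph of
`w` lies in the rectangle `[i,a] × [w i, w a]`. -/
def isNbrN (w : Equiv.Perm ℕ) (i a : ℕ) : Prop :=
  i ≤ a ∧ w i ≤ w a ∧ (a, w a) ≠ (i, w i) ∧
    ∀ a', i ≤ a' → a' ≤ a → w i ≤ w a' → w a' ≤ w a → a' = i ∨ a' = a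

/-- For `U = {i_1 < i_2 < ⋯ < i_k}`, the permutation
`w_{U,i} = w t_{i,i_k} t_{i,i_{k-1}} ⋯ t_{i,i_1}`. -/
def wUN (w : Equiv.Perm ℕ) (i : ℕ) (U : Finset ℕ) : Equiv.Perm ℕ :=
  ((U.sort (· ≤ ·)).reverse).foldl (fun v j => v * Equiv.swap i j) w

/-- Bruhat order on finitely supported permutations of `ℕ`: the
reflexive-transitive closure of the covering relation `u ⋖ u t_{a,b}` when
`ℓ(u t_{a,b}) = ℓ(u) + 1`. -/
def bruhatLEN (u v : Equiv.Perm ℕ) : Prop :=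
  Relation.ReflTransGen
    (fun x y => (∃ a b : ℕ, a ≠ b ∧ y = x * Equiv.swap a b) ∧ lenN y = lenN x + 1) u v

/-!
The Bruhat order on finitely supported permutations of `ℕ` is read off the rank function
`rk u p q = #{x < p | q ≤ u x}`: `u ≤ v` iff `rk u ≤ rk v` pointwise. One direction holds because
a cover `u ⋖ u (a b)` with `a < b` raises `rk` by the indicator of the rectangle
`(a, b] × (u a, u b]`; for the other, if `rk u ≤ rk v` and `u ≠ v`, the first position `a` where
they differ and the first `b > a` with `u a < u b ≤ v a` give a cover of `u` still below `v`.

The neighbours of `(i, w i)` have decreasing values, so for a set `U` of neighbours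
`rk w_{U,i} = rk w + 1_{S_U}`, where `S_U` is the union of the rectangles `(i, a] × (w i, w a]`
over `a ∈ U`. Hence `U ↦ w_{U,i}` is monotone, `w_{φ,i}` is the join of the atoms `w t_{i,a}`,
and a permutation between `w` and `w_{φ,i}` agrees with `w` off `{i} ∪ φ` and lies below `w` on
`φ`, which forces it to be some `w_{U,i}`.
-/

open Equiv Finset

section FixedFrom

def FixedFrom (N : ℕ) (u : Perm ℕ) : Prop := ∀ x, N ≤ x → u x = x

variable {N : ℕ} {u : Perm ℕ}

theorem FixedFrom.apply_lt (h : FixedFrom N u) {x : ℕ} (hx : x < N) : u x < N := by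
  by_contra! hc
  have := u.injective (h (u x) hc)
  omega

theorem FixedFrom.mono (h : FixedFrom N u) {M : ℕ} (hNM : N ≤ M) : FixedFrom M u :=
  fun x hx => h x (hNM.trans hx)

theorem FixedFrom.mul_swap (h : FixedFrom N u) {a b : ℕ} (ha : a < N) (hb : b < N) :
    FixedFrom N (u * swap a b) := fun x hx => by
  rw [Perm.mul_apply, swap_apply_of_ne_of_ne (by omega) (by omega), h x hx]

theorem FixedFrom.fsupp (h : FixedFrom N u) : fsupp u :=
  (Set.finite_Iio N).subset fun x hx => by_contra fun hc => hx (h x (not_lt.mp hc))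

theorem fsupp.exists_fixedFrom (h : fsupp u) : ∃ N, FixedFrom N u := by
  obtain ⟨M, hM⟩ := h.bddAbove
  exact ⟨M + 1, fun x hx => by_contra fun hc => absurd (hM hc) (by omega)⟩

theorem fsupp_mul_swap (hu : fsupp u) (a b : ℕ) : fsupp (u * swap a b) :=
  (Set.finite_Iio (a + b + 1) |>.union hu).subset fun x hx => by
    by_cases hab : x = a ∨ x = b
    · exact Or.inl (by simp only [Set.mem_Iio]; omega)
    · push Not at hab
      refine Or.inr fun hux => hx ?_
      rw [Perm.mul_apply, swap_apply_of_ne_of_ne hab.1 hab.2, hux]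

theorem fsupp_of_bruhatLEN {v : Perm ℕ} (h : bruhatLEN u v) (hu : fsupp u) : fsupp v := by
  induction h with
  | refl => exact hu
  | tail _ hstep ih =>
    obtain ⟨⟨a, b, -, rfl⟩, -⟩ := hstep
    exact fsupp_mul_swap ih a b

end FixedFrom

section Length

def inversions (u : Perm ℕ) : Set (ℕ × ℕ) := {p | p.1 < p.2 ∧ u p.2 < u p.1}

variable {u : Perm ℕ} {a b : ℕ}

theorem lenN_eq_ncard_inversions (u : Perm ℕ) : lenN u = (inversions u).ncard := rfl

theorem FixedFrom.inversions_subset {N : ℕ} (h : FixedFrom N u) :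
    inversions u ⊆ Set.Iio N ×ˢ Set.Iio N := by
  rintro ⟨p, q⟩ ⟨hpq, hval⟩
  dsimp only at hpq hval
  simp only [Set.mem_prod, Set.mem_Iio]
  by_contra! hc
  by_cases hp : p < N
  · have := h.apply_lt hp
    have := h q (hc hp)
    omega
  · have := h p (by omega)
    have := h q (by omega)
    omega

theorem finite_inversions (hu : fsupp u) : (inversions u).Finite := by
  obtain ⟨N, hN⟩ := hu.exists_fixedFrom
  exact ((Set.finite_Iio N).prod (Set.finite_Iio N)).subset hN.inversions_subset

/-- An involution on increasing pairs which, when `(a, b)` is a cover of `u`, matches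
`insert (a, b) (inversions u)` with `inversions (u * swap a b)`. -/
def swapPair (a b : ℕ) (e : ℕ × ℕ) : ℕ × ℕ :=
  if swap a b e.1 < swap a b e.2 then (swap a b e.1, swap a b e.2) else e

theorem swapPair_swapPair {e : ℕ × ℕ} (h : e.1 < e.2) : swapPair a b (swapPair a b e) = e := by
  unfold swapPair
  split_ifs with h1 h2 <;> simp_all

theorem fst_eq_or_snd_eq_of_not_swap_lt (hab : a < b) {p q : ℕ} (hpq : p < q)
    (h : ¬ swap a b p < swap a b q) :
    (p = a ∧ q = b) ∨ (p = a ∧ a < q ∧ q < b) ∨ (q = b ∧ a < p ∧ p < b) := by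
  rw [swap_apply_def, swap_apply_def] at h
  split_ifs at h <;> omega

theorem swapPair_mem_inversions_mul_swap (hab : a < b) (hv : u a < u b) {e : ℕ × ℕ}
    (he : e ∈ insert (a, b) (inversions u)) : swapPair a b e ∈ inversions (u * swap a b) := by
  obtain ⟨p, q⟩ := e
  obtain ⟨rfl, rfl⟩ | ⟨hpq, hval⟩ : (p = a ∧ q = b) ∨ p < q ∧ u q < u p := by
    simpa [inversions] using he
  · simp [swapPair, inversions, hab.not_gt, hab, hv]
  · by_cases hc : swap a b p < swap a b q
    · simpa [swapPair, hc, inversions] using hval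
    · simp only [swapPair, hc, if_false, inversions, Set.mem_ofPred_eq, Perm.mul_apply]
      refine ⟨hpq, ?_⟩
      rcases fst_eq_or_snd_eq_of_not_swap_lt hab hpq hc with ⟨rfl, rfl⟩ | ⟨rfl, h⟩ | ⟨rfl, h⟩
      · omega
      · rw [swap_apply_left, swap_apply_of_ne_of_ne (by omega) (by omega)]; omega
      · rw [swap_apply_right, swap_apply_of_ne_of_ne (by omega) (by omega)]; omega

theorem swapPair_mem_insert_inversions (hab : a < b)
    (hcov : ∀ c, a < c → c < b → ¬(u a < u c ∧ u c < u b)) {e : ℕ × ℕ}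
    (he : e ∈ inversions (u * swap a b)) : swapPair a b e ∈ insert (a, b) (inversions u) := by
  obtain ⟨p, q⟩ := e
  obtain ⟨hpq, hval⟩ := he
  dsimp only at hpq hval
  rw [Perm.mul_apply, Perm.mul_apply] at hval
  by_cases hc : swap a b p < swap a b q
  · simpa [swapPair, hc, inversions] using Or.inr hval
  · simp only [swapPair, hc, if_false, inversions, Set.mem_insert_iff, Set.mem_ofPred_eq,
      Prod.mk.injEq]
    rcases fst_eq_or_snd_eq_of_not_swap_lt hab hpq hc with ⟨rfl, rfl⟩ | ⟨rfl, h⟩ | ⟨rfl, h⟩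
    · exact Or.inl ⟨rfl, rfl⟩
    · rw [swap_apply_left, swap_apply_of_ne_of_ne (by omega) (by omega)] at hval
      have := hcov q h.1 h.2
      have : u q ≠ u p := fun h' => by have := u.injective h'; omega
      right; omega
    · rw [swap_apply_right, swap_apply_of_ne_of_ne (by omega) (by omega)] at hval
      have := hcov p h.1 h.2
      have : u p ≠ u q := fun h' => by have := u.injective h'; omega
      right; omega

theorem fst_lt_snd_of_mem_insert_inversions (hab : a < b) {e : ℕ × ℕ}
    (he : e ∈ insert (a, b) (inversions u)) : e.1 < e.2 := by
  rcases he with rfl | he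
  exacts [hab, he.1]

theorem notMem_inversions (hv : u a < u b) : (a, b) ∉ inversions u :=
  fun h => absurd h.2 (by dsimp only; omega)

theorem lenN_mul_swap_of_cover (hu : fsupp u) (hab : a < b) (hv : u a < u b)
    (hcov : ∀ c, a < c → c < b → ¬(u a < u c ∧ u c < u b)) :
    lenN (u * swap a b) = lenN u + 1 := by
  rw [lenN_eq_ncard_inversions, lenN_eq_ncard_inversions,
    ← Set.ncard_insert_of_notMem (notMem_inversions hv) (finite_inversions hu)]
  refine (Set.ncard_congr (fun e _ => swapPair a b e)
    (fun e he => swapPair_mem_inversions_mul_swap hab hv he) ?_ ?_).symm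
  · intro e e' he he' h
    rw [← swapPair_swapPair (fst_lt_snd_of_mem_insert_inversions hab he),
      ← swapPair_swapPair (fst_lt_snd_of_mem_insert_inversions hab he'), h]
  · exact fun e he => ⟨swapPair a b e, swapPair_mem_insert_inversions hab hcov he,
      swapPair_swapPair he.1⟩

theorem lenN_lt_lenN_mul_swap (hu : fsupp u) (hab : a < b) (hv : u a < u b) :
    lenN u < lenN (u * swap a b) := by
  rw [lenN_eq_ncard_inversions, lenN_eq_ncard_inversions, Nat.lt_iff_add_one_le,
    ← Set.ncard_insert_of_notMem (notMem_inversions hv) (finite_inversions hu)]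
  refine Set.ncard_le_ncard_of_injOn (swapPair a b)
    (fun e he => swapPair_mem_inversions_mul_swap hab hv he) ?_
    (finite_inversions (fsupp_mul_swap hu a b))
  intro e he e' he' h
  rw [← swapPair_swapPair (fst_lt_snd_of_mem_insert_inversions hab he),
    ← swapPair_swapPair (fst_lt_snd_of_mem_insert_inversions hab he'), h]

theorem apply_lt_of_lenN_mul_swap (hu : fsupp u) (hab : a < b)
    (hlen : lenN (u * swap a b) = lenN u + 1) : u a < u b := by
  by_contra! hc
  have hv : (u * swap a b) a < (u * swap a b) b := by
    simp only [Perm.mul_apply, swap_apply_left, swap_apply_right]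
    exact lt_of_le_of_ne hc fun h => by have := u.injective h; omega
  have := lenN_lt_lenN_mul_swap (fsupp_mul_swap hu a b) hab hv
  rw [mul_swap_mul_self] at this
  omega

end Length

section Rank

def rk (u : Perm ℕ) (p q : ℕ) : ℕ := #{x ∈ range p | q ≤ u x}

variable {u v : Perm ℕ} {a b p q : ℕ}

theorem rk_succ (u : Perm ℕ) (p q : ℕ) :
    rk u (p + 1) q = rk u p q + if q ≤ u p then 1 else 0 := by
  rw [rk, rk, range_add_one, filter_insert]
  split_ifs
  · rw [card_insert_of_notMem (by simp)]
  · rfl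

theorem rk_congr (h : ∀ x < p, u x = v x) (q : ℕ) : rk u p q = rk v p q := by
  unfold rk
  congr 1
  exact filter_congr fun x hx => by rw [h x (mem_range.mp hx)]

theorem rk_eq_add_card_Ioo (u : Perm ℕ) (hap : a < p) (q : ℕ) :
    rk u p q = rk u a q + (if q ≤ u a then 1 else 0) + #{x ∈ Ioo a p | q ≤ u x} := by
  rw [← rk_succ, rk, rk, ← card_union_of_disjoint]
  · congr 1
    ext x
    simp only [mem_union, mem_filter, mem_range, mem_Ioo]
    omega
  · exact disjoint_filter_filter <| disjoint_left.mpr fun x h1 h2 => by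
      simp only [mem_range, mem_Ioo] at h1 h2; omega

theorem rk_mul_swap (hab : a < b) (hv : u a < u b) (p q : ℕ) :
    rk (u * swap a b) p q = rk u p q + if a < p ∧ p ≤ b ∧ u a < q ∧ q ≤ u b then 1 else 0 := by
  induction p with
  | zero => simp only [rk, range_zero, filter_empty, card_empty, Nat.not_lt_zero, false_and,
      if_false]
  | succ p ih =>
    rw [rk_succ, rk_succ, ih, Perm.mul_apply]
    rcases eq_or_ne p a with rfl | hpa
    · rw [swap_apply_left]; split_ifs <;> omega
    rcases eq_or_ne p b with rfl | hpb
    · rw [swap_apply_right]; split_ifs <;> omega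
    · rw [swap_apply_of_ne_of_ne hpa hpb]; split_ifs <;> omega

theorem le_apply_of_rk_le (h₁ : rk u (p + 1) q ≤ rk v (p + 1) q) (h₂ : rk v p q ≤ rk u p q)
    (hq : q ≤ u p) : q ≤ v p := by
  rw [rk_succ, rk_succ, if_pos hq] at h₁
  split_ifs at h₁ with h
  · exact h
  · omega

end Rank

section BruhatRank

variable {u v : Perm ℕ}

theorem rk_le_rk_mul_swap (hu : fsupp u) {a b : ℕ} (hab : a ≠ b)
    (hlen : lenN (u * swap a b) = lenN u + 1) (p q : ℕ) : rk u p q ≤ rk (u * swap a b) p q := by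
  wlog h : a < b generalizing a b
  · rw [swap_comm] at hlen ⊢
    exact this hab.symm hlen (by omega)
  rw [rk_mul_swap h (apply_lt_of_lenN_mul_swap hu h hlen)]
  omega

theorem rk_le_of_bruhatLEN (hu : fsupp u) (h : bruhatLEN u v) (p q : ℕ) :
    rk u p q ≤ rk v p q := by
  induction h with
  | refl => rfl
  | tail huv hstep ih =>
    obtain ⟨⟨a, b, hab, rfl⟩, hlen⟩ := hstep
    exact ih.trans (rk_le_rk_mul_swap (fsupp_of_bruhatLEN huv hu) hab hlen p q)

section Descent

variable (hle : ∀ p q, rk u p q ≤ rk v p q) {a : ℕ} (heq : ∀ x < a, u x = v x)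
include hle heq

theorem apply_lt_of_rk_le (hne : u a ≠ v a) : u a < v a := by
  by_contra! h
  have := hle (a + 1) (u a)
  rw [rk_succ, rk_succ, if_pos le_rfl, if_neg (by omega), rk_congr heq] at this
  omega

theorem rk_lt_of_rk_le {b p q : ℕ} (hbv : u b ≤ v a)
    (hmin : ∀ x, a < x → x < b → u a < u x → v a < u x)
    (hap : a < p) (hpb : p ≤ b) (hq : u a < q) (hqb : q ≤ u b) : rk u p q < rk v p q := by
  -- On `(a, p)` no value of `u` lies in `[q, v a]`, so `rk u p q` may be compared with
  -- `rk u p (v a + 1) ≤ rk v p (v a + 1)`, while `v` gains the point `(a, v a)`.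
  have hu : #{x ∈ Ioo a p | q ≤ u x} ≤ #{x ∈ Ioo a p | v a + 1 ≤ u x} :=
    card_le_card fun x hx => by
      simp only [mem_filter, mem_Ioo] at hx ⊢
      exact ⟨hx.1, hmin x hx.1.1 (by omega) (by omega)⟩
  have hv : #{x ∈ Ioo a p | v a + 1 ≤ v x} ≤ #{x ∈ Ioo a p | q ≤ v x} :=
    card_le_card fun x hx => by
      simp only [mem_filter] at hx ⊢
      exact ⟨hx.1, by omega⟩
  have e₁ := rk_eq_add_card_Ioo u hap q
  have e₂ := rk_eq_add_card_Ioo v hap q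
  have e₃ := rk_eq_add_card_Ioo u hap (v a + 1)
  have e₄ := rk_eq_add_card_Ioo v hap (v a + 1)
  rw [if_neg (by omega)] at e₁ e₃ e₄
  rw [if_pos (by omega)] at e₂
  have := rk_congr heq q
  have := rk_congr heq (v a + 1)
  have := hle p (v a + 1)
  omega

end Descent

theorem exists_cover_of_rk_le {N : ℕ} (hu : FixedFrom N u) (hv : FixedFrom N v)
    (hle : ∀ p q, rk u p q ≤ rk v p q) (hne : u ≠ v) :
    ∃ a b, a < b ∧ b < N ∧ u a < u b ∧ (∀ c, a < c → c < b → ¬(u a < u c ∧ u c < u b)) ∧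
      ∀ p q, rk (u * swap a b) p q ≤ rk v p q := by
  have hex : ∃ x, u x ≠ v x := by
    by_contra! h
    exact hne (Equiv.ext h)
  obtain ⟨a, hne_a, heq⟩ : ∃ a, u a ≠ v a ∧ ∀ x < a, u x = v x :=
    ⟨Nat.find hex, Nat.find_spec hex, fun x hx => not_not.mp (Nat.find_min hex hx)⟩
  have hua := apply_lt_of_rk_le hle heq hne_a
  have hbex : ∃ x, a < x ∧ u a < u x ∧ u x ≤ v a := by
    refine ⟨u.symm (v a), ?_, by simpa using hua, by simp⟩
    by_contra! h
    rcases h.lt_or_eq with h | h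
    · have := heq _ h
      rw [apply_symm_apply] at this
      exact h.ne (v.injective this).symm
    · exact hne_a (by rw [← h, apply_symm_apply, h])
  obtain ⟨b, ⟨hab, hub, hbv⟩, hbmin⟩ : ∃ b, (a < b ∧ u a < u b ∧ u b ≤ v a) ∧
      ∀ x < b, ¬(a < x ∧ u a < u x ∧ u x ≤ v a) :=
    ⟨Nat.find hbex, Nat.find_spec hbex, fun x hx => Nat.find_min hbex hx⟩
  have hmin : ∀ x, a < x → x < b → u a < u x → v a < u x := fun x h₁ h₂ h₃ =>
    lt_of_not_ge fun h₄ => hbmin x h₂ ⟨h₁, h₃, h₄⟩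
  have haN : a < N := by_contra fun h => hne_a <| by
    rw [hu a (by omega), hv a (by omega)]
  have hbN : b < N := by_contra fun h => by
    have := hu b (by omega)
    have := hv.apply_lt haN
    omega
  refine ⟨a, b, hab, hbN, hub, fun c h₁ h₂ h₃ => ?_, fun p q => ?_⟩
  · have := hmin c h₁ h₂ h₃.1
    omega
  · rw [rk_mul_swap hab hub]
    split_ifs with h
    · exact rk_lt_of_rk_le hle heq hbv hmin h.1 h.2.1 h.2.2.1 h.2.2.2
    · simpa using hle p q

theorem bruhatLEN_of_rk_le {N : ℕ} (hu : FixedFrom N u) (hv : FixedFrom N v)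
    (hle : ∀ p q, rk u p q ≤ rk v p q) : bruhatLEN u v := by
  induction hm : ∑ e ∈ range N ×ˢ range N, (rk v e.1 e.2 - rk u e.1 e.2)
    using Nat.strong_induction_on generalizing u with
  | _ m ih =>
  by_cases huv : u = v
  · exact huv ▸ .refl
  obtain ⟨a, b, hab, hbN, hub, hcov, hle'⟩ := exists_cover_of_rk_le hu hv hle huv
  have hrk := rk_mul_swap hab hub
  refine .head ⟨⟨a, b, hab.ne, rfl⟩, lenN_mul_swap_of_cover hu.fsupp hab hub hcov⟩
    (ih _ ?_ (hu.mul_swap (hab.trans hbN) hbN) hle' rfl)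
  rw [← hm]
  refine sum_lt_sum (fun e _ => by have := hrk e.1 e.2; omega) ⟨(b, u b), ?_, ?_⟩
  · simpa using ⟨hbN, hu.apply_lt hbN⟩
  · have hb := hrk b (u b)
    rw [if_pos ⟨hab, le_rfl, hub, le_rfl⟩] at hb
    have := hle' b (u b)
    dsimp only
    omega

theorem bruhatLEN_iff_rk_le (hu : fsupp u) (hv : fsupp v) :
    bruhatLEN u v ↔ ∀ p q, rk u p q ≤ rk v p q := by
  refine ⟨rk_le_of_bruhatLEN hu, fun hle => ?_⟩
  obtain ⟨M, hM⟩ := hu.exists_fixedFrom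
  obtain ⟨N, hN⟩ := hv.exists_fixedFrom
  exact bruhatLEN_of_rk_le (hM.mono (le_max_left M N)) (hN.mono (le_max_right M N)) hle

end BruhatRank

section Neighbor

variable {w : Perm ℕ} {i : ℕ}

theorem isNbrN.lt {a : ℕ} (h : isNbrN w i a) : i < a ∧ w i < w a := by
  obtain ⟨h₁, h₂, h₃, -⟩ := h
  have : a ≠ i := fun hc => h₃ (by rw [hc])
  have : w a ≠ w i := fun hc => this (w.injective hc)
  omega

theorem isNbrN.apply_lt_apply {a b : ℕ} (ha : isNbrN w i a) (hb : isNbrN w i b) (hab : a < b) :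
    w b < w a := by
  by_contra! hc
  have := ha.lt
  rcases hb.2.2.2 a ha.1 hab.le ha.2.1 hc with h | h <;> omega

theorem exists_isNbrN_le {x : ℕ} (hix : i ≤ x) (hwx : w i ≤ w x) (hxi : x ≠ i) :
    ∃ a, isNbrN w i a ∧ a ≤ x ∧ w a ≤ w x := by
  by_cases hx : isNbrN w i x
  · exact ⟨x, hx, le_rfl, le_rfl⟩
  have : ¬ ∀ y, i ≤ y → y ≤ x → w i ≤ w y → w y ≤ w x → y = i ∨ y = x :=
    fun h => hx ⟨hix, hwx, fun hc => hxi (Prod.ext_iff.mp hc).1, h⟩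
  push Not at this
  obtain ⟨y, hiy, hyx, hwiy, hwyx, hyi, hyx'⟩ := this
  have : w y ≠ w x := fun hc => hyx' (w.injective hc)
  obtain ⟨a, ha, hay, hway⟩ := exists_isNbrN_le hiy hwiy hyi
  exact ⟨a, ha, hay.trans hyx, hway.trans hwyx⟩
termination_by (x - i) + (w x - w i)
decreasing_by omega

theorem isNbrN.apply_lt_apply_of_le {x u : ℕ} (hu : isNbrN w i u) (hix : i < x)
    (hwx : w i ≤ w x) (hxu : x ≤ u) (hne : x ≠ u) : w u < w x := by
  obtain ⟨a, ha, hax, hwa⟩ := exists_isNbrN_le hix.le hwx hix.ne'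
  have := ha.apply_lt_apply hu (by omega)
  omega

theorem finite_setOf_isNbrN (hw : fsupp w) (i : ℕ) : {a | isNbrN w i a}.Finite := by
  obtain ⟨N, hN⟩ := hw.exists_fixedFrom
  -- The fixed point `N + i + w i + 1` would lie in the rectangle of any neighbour beyond it.
  refine (Set.finite_Iic (N + i + w i + 1)).subset fun a ha => ?_
  by_contra! hc
  simp only [Set.mem_Iic, not_le] at hc
  have hwc : w (N + i + w i + 1) = N + i + w i + 1 := hN _ (by omega)
  have hwa : w a = a := hN a (by omega)
  rcases ha.2.2.2 (N + i + w i + 1) (by omega) (by omega) (by omega) (by omega) with h | h <;>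
    omega

end Neighbor

section Staircase

variable {w : Perm ℕ} {i : ℕ} {U V : Finset ℕ}

@[simp]
theorem wUN_empty (w : Perm ℕ) (i : ℕ) : wUN w i ∅ = w := by
  simp [wUN]

theorem wUN_insert {u : ℕ} (hU : ∀ x ∈ U, u < x) :
    wUN w i (insert u U) = wUN w i U * swap i u := by
  rw [wUN, wUN, sort_insert (· ≤ ·) (fun x hx => (hU x hx).le) fun hu => (hU u hu).false,
    List.reverse_cons, List.foldl_append]
  rfl

theorem wUN_singleton (w : Perm ℕ) (i a : ℕ) : wUN w i {a} = w * swap i a := by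
  simpa using wUN_insert (w := w) (i := i) (U := ∅) (u := a) (by simp)

theorem fsupp_wUN (hw : fsupp w) (U : Finset ℕ) : fsupp (wUN w i U) := by
  induction U using Finset.induction_on_min with
  | empty => simpa
  | insert u U hU ih => simpa [wUN_insert hU] using fsupp_mul_swap ih i u

theorem wUN_apply_of_ne {x : ℕ} (hxi : x ≠ i) (hxU : x ∉ U) : wUN w i U x = w x := by
  induction U using Finset.induction_on_min with
  | empty => simp
  | insert u U hU ih =>
    rw [mem_insert, not_or] at hxU
    rw [wUN_insert hU, Perm.mul_apply, swap_apply_of_ne_of_ne hxi hxU.1, ih hxU.2]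

theorem wUN_apply_self (hU : U.Nonempty) (hi : i ∉ U) : wUN w i U i = w (U.min' hU) := by
  have h := wUN_insert (w := w) (i := i) fun x hx => U.min'_lt_of_mem_erase_min' hU hx
  rw [insert_erase (U.min'_mem hU)] at h
  rw [h, Perm.mul_apply, swap_apply_left,
    wUN_apply_of_ne (ne_of_mem_of_not_mem (U.min'_mem hU) hi) (notMem_erase _ _)]

/-- The region where `rk (wUN w i U)` exceeds `rk w` (see `rk_wUN`). -/
def InStair (w : Perm ℕ) (i : ℕ) (U : Finset ℕ) (p q : ℕ) : Prop :=
  i < p ∧ w i < q ∧ ∃ u ∈ U, p ≤ u ∧ q ≤ w u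

instance (w : Perm ℕ) (i : ℕ) (U : Finset ℕ) (p q : ℕ) : Decidable (InStair w i U p q) := by
  unfold InStair
  infer_instance

theorem InStair.mono {p q : ℕ} (hUV : U ⊆ V) (h : InStair w i U p q) : InStair w i V p q :=
  let ⟨hp, hq, u, hu, h⟩ := h
  ⟨hp, hq, u, hUV hu, h⟩

theorem inStair_iff_of_forall_le (hU : ∀ a ∈ U, isNbrN w i a) {p q : ℕ}
    (hp : ∀ x ∈ U, p ≤ x) : InStair w i U p q ↔ i < p ∧ w i < q ∧ q ≤ wUN w i U i := by
  rcases U.eq_empty_or_nonempty with rfl | hne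
  · simp only [InStair, notMem_empty, false_and, exists_false, and_false, wUN_empty,
      false_iff]
    omega
  have hmin := U.min'_mem hne
  rw [wUN_apply_self hne fun hi => (hU i hi).lt.1.false]
  refine and_congr_right fun _ => and_congr_right fun _ => ⟨?_, fun h => ⟨_, hmin, hp _ hmin, h⟩⟩
  rintro ⟨u, hu, -, hqu⟩
  rcases (U.min'_le u hu).lt_or_eq with h | h
  · exact hqu.trans ((hU _ hmin).apply_lt_apply (hU u hu) h).le
  · exact h ▸ hqu

theorem rk_wUN (hU : ∀ a ∈ U, isNbrN w i a) (p q : ℕ) :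
    rk (wUN w i U) p q = rk w p q + if InStair w i U p q then 1 else 0 := by
  induction U using Finset.induction_on_min with
  | empty => simp [InStair]
  | insert u U hlt ih =>
    have hu := hU u (mem_insert_self u U)
    have hU' : ∀ a ∈ U, isNbrN w i a := fun a ha => hU a (mem_insert_of_mem ha)
    have hiu := hu.lt
    have hwu : wUN w i U u = w u := wUN_apply_of_ne hiu.1.ne' fun h => (hlt u h).false
    have hwi : w i ≤ wUN w i U i ∧ wUN w i U i < w u := by
      rcases U.eq_empty_or_nonempty with rfl | hne
      · simpa using hiu.2
      · rw [wUN_apply_self hne fun hi => (hU' i hi).lt.1.false]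
        have hm := hU' _ (U.min'_mem hne)
        exact ⟨hm.lt.2.le, hu.apply_lt_apply hm (hlt _ (U.min'_mem hne))⟩
    rw [wUN_insert hlt, rk_mul_swap hiu.1 (hwu ▸ hwi.2), ih hU', hwu]
    by_cases hpu : p ≤ u
    · have hins := inStair_iff_of_forall_le hU (p := p) (q := q) fun x hx => by
        rcases mem_insert.mp hx with rfl | hx
        exacts [hpu, hpu.trans (hlt x hx).le]
      have hold := inStair_iff_of_forall_le hU' (p := p) (q := q) fun x hx =>
        hpu.trans (hlt x hx).le
      rw [wUN_insert hlt, Perm.mul_apply, swap_apply_left, hwu] at hins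
      simp only [hins, hold]
      split_ifs <;> omega
    · have : InStair w i (insert u U) p q ↔ InStair w i U p q := by
        simp only [InStair, exists_mem_insert, hpu, false_and, false_or]
      simp only [this]
      split_ifs <;> omega

end Staircase

theorem Equiv.Perm.eq_of_forall_ne {α : Type*} {σ τ : Perm α} (a : α)
    (h : ∀ x, x ≠ a → σ x = τ x) : σ = τ := by
  ext x
  by_cases hx : x = a
  · subst hx
    by_contra hne
    have hy : σ.symm (τ x) ≠ x := fun hy => hne (by rw [← hy, apply_symm_apply, hy])
    have := h _ hy
    rw [apply_symm_apply] at this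
    exact hy (τ.injective this).symm
  · exact h x hx

section Interval

variable {w z : Perm ℕ} {i : ℕ} {U V : Finset ℕ}

theorem bruhatLEN_wUN_wUN (hw : fsupp w) (hV : ∀ a ∈ V, isNbrN w i a) (hUV : U ⊆ V) :
    bruhatLEN (wUN w i U) (wUN w i V) := by
  rw [bruhatLEN_iff_rk_le (fsupp_wUN hw U) (fsupp_wUN hw V)]
  intro p q
  rw [rk_wUN (fun a ha => hV a (hUV ha)), rk_wUN hV]
  have := InStair.mono (w := w) (i := i) (p := p) (q := q) hUV
  split_ifs <;> simp_all

theorem bruhatLEN_wUN_of_forall (hw : fsupp w) (hU : ∀ a ∈ U, isNbrN w i a) (hne : U.Nonempty)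
    (hz : ∀ a ∈ U, bruhatLEN (w * swap i a) z) : bruhatLEN (wUN w i U) z := by
  obtain ⟨a₀, ha₀⟩ := hne
  have hrk : ∀ a ∈ U, ∀ p q, rk w p q + (if InStair w i {a} p q then 1 else 0) ≤ rk z p q :=
    fun a ha p q => by
      rw [← rk_wUN (by simpa using hU a ha), wUN_singleton]
      exact rk_le_of_bruhatLEN (fsupp_mul_swap hw i a) (hz a ha) p q
  rw [bruhatLEN_iff_rk_le (fsupp_wUN hw U)
    (fsupp_of_bruhatLEN (hz a₀ ha₀) (fsupp_mul_swap hw i a₀))]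
  intro p q
  rw [rk_wUN hU]
  split_ifs with h
  · obtain ⟨hp, hq, a, ha, h⟩ := h
    simpa [InStair, hp, hq, h] using hrk a ha p q
  · simpa using le_self_add.trans (hrk a₀ ha₀ p q)

theorem exists_subset_eq_wUN (hU : ∀ a ∈ U, isNbrN w i a)
    (hoff : ∀ x, x ≠ i → x ∉ U → z x = w x) (hle : ∀ x ∈ U, z x ≤ w x) :
    ∃ V ⊆ U, z = wUN w i V := by
  induction U using Finset.induction_on_min generalizing z with
  | empty =>
    refine ⟨∅, subset_rfl, ?_⟩
    simpa using Perm.eq_of_forall_ne i fun x hx => hoff x hx (notMem_empty x)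
  | insert u U hlt ih =>
    have hu := hU u (mem_insert_self u U)
    have hU' : ∀ a ∈ U, isNbrN w i a := fun a ha => hU a (mem_insert_of_mem ha)
    by_cases hzu : z u = w u
    · obtain ⟨V, hVU, rfl⟩ := ih hU' (fun x hxi hxU => by
          by_cases hxu : x = u
          · exact hxu ▸ hzu
          · exact hoff x hxi (by simp [hxu, hxU]))
        fun x hx => hle x (mem_insert_of_mem hx)
      exact ⟨V, hVU.trans (subset_insert _ _), rfl⟩
    have hzi : z i = w u := by
      by_contra hzi
      set y := z.symm (w u)
      have hy : z y = w u := apply_symm_apply z (w u)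
      have hyi : y ≠ i := fun h => hzi (h ▸ hy)
      by_cases hyU : y ∈ U
      · have := hle y (mem_insert_of_mem hyU)
        have := hu.apply_lt_apply (hU' y hyU) (hlt y hyU)
        omega
      · have hyu : y ≠ u := fun h => hzu (h ▸ hy)
        rw [hoff y hyi (by simp [hyu, hyU])] at hy
        exact hyu (w.injective hy)
    obtain ⟨V, hVU, hV⟩ := ih (z := z * swap i u) hU' (fun x hxi hxU => by
        by_cases hxu : x = u
        · rw [hxu, Perm.mul_apply, swap_apply_right, hzi]
        · rw [Perm.mul_apply, swap_apply_of_ne_of_ne hxi hxu, hoff x hxi (by simp [hxu, hxU])])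
      fun x hx => by
        rw [Perm.mul_apply, swap_apply_of_ne_of_ne (hU' x hx).lt.1.ne' (hlt x hx).ne']
        exact hle x (mem_insert_of_mem hx)
    refine ⟨insert u V, insert_subset_insert _ hVU, ?_⟩
    rw [wUN_insert (fun x hx => hlt x (hVU hx)), ← hV, mul_swap_mul_self]

theorem not_inStair_succ (hU : ∀ a ∈ U, isNbrN w i a) {x : ℕ} (hxi : x ≠ i) :
    ¬ InStair w i U (x + 1) (w x + 1) := by
  rintro ⟨hix, hwx, u, hu, hxu, hwu⟩
  have := (hU u hu).apply_lt_apply_of_le (x := x) (by omega) (by omega) (by omega) (by omega)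
  omega

theorem not_inStair_of_notMem (hU : ∀ a ∈ U, isNbrN w i a) {x : ℕ} (hxU : x ∉ U) :
    ¬ InStair w i U x (w x) := by
  rintro ⟨hix, hwx, u, hu, hxu, hwu⟩
  have := (hU u hu).apply_lt_apply_of_le hix hwx.le hxu (ne_of_mem_of_not_mem hu hxU).symm
  omega

theorem exists_subset_eq_wUN_of_bruhatLEN (hw : fsupp w) (hU : ∀ a ∈ U, isNbrN w i a)
    (hwz : bruhatLEN w z) (hzU : bruhatLEN z (wUN w i U)) : ∃ V ⊆ U, z = wUN w i V := by
  have hz := fsupp_of_bruhatLEN hwz hw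
  have hlo : ∀ p q, rk w p q ≤ rk z p q := rk_le_of_bruhatLEN hw hwz
  have hhi : ∀ p q, ¬ InStair w i U p q → rk z p q ≤ rk w p q := fun p q h => by
    simpa [rk_wUN hU, h] using rk_le_of_bruhatLEN hz hzU p q
  have hle : ∀ x, x ≠ i → z x ≤ w x := fun x hxi => by
    by_contra! h
    have := le_apply_of_rk_le (hhi _ _ (not_inStair_succ hU hxi)) (hlo x (w x + 1)) h
    omega
  have hge : ∀ x, x ∉ U → w x ≤ z x := fun x hxU =>
    le_apply_of_rk_le (hlo _ _) (hhi _ _ (not_inStair_of_notMem hU hxU)) le_rfl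
  exact exists_subset_eq_wUN hU (fun x hxi hxU => le_antisymm (hle x hxi) (hge x hxU))
    fun x hx => hle x (hU x hx).lt.1.ne'

theorem bruhatLEN_wUN_iff (hw : fsupp w) (hU : ∀ a ∈ U, isNbrN w i a) :
    bruhatLEN w z ∧ bruhatLEN z (wUN w i U) ↔ ∃ V ⊆ U, z = wUN w i V := by
  refine ⟨fun h => exists_subset_eq_wUN_of_bruhatLEN hw hU h.1 h.2, ?_⟩
  rintro ⟨V, hVU, rfl⟩
  exact ⟨by simpa using bruhatLEN_wUN_wUN hw (fun a ha => hU a (hVU ha)) (empty_subset V),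
    bruhatLEN_wUN_wUN hw hU hVU⟩

end Interval

/-- Lemma 2.4(2): the Bruhat interval `[w, ∨Φ_i(w)]` is
`{w} ∪ {w_{U,i} : ∅ ≠ U ⊆ φ_i(w)}`. Here `φ_i(w)` is the set of `a` with
`(a, w(a))` a neighbor of `(i, w(i))`, `Φ_i(w) = {w t_{i,a} : a ∈ φ_i(w)}` is
assumed nonempty, and the join `∨Φ_i(w)` is the least upper bound of `Φ_i(w)`
in Bruhat order. -/
theorem bruhat_interval_boolean
    (w : Equiv.Perm ℕ) (i : ℕ) (hw : fsupp w) (hne : ∃ a, isNbrN w i a) :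
    ∃ v : Equiv.Perm ℕ,
      (∀ a, isNbrN w i a → bruhatLEN (w * Equiv.swap i a) v) ∧
      (∀ z : Equiv.Perm ℕ,
        (∀ a, isNbrN w i a → bruhatLEN (w * Equiv.swap i a) z) → bruhatLEN v z) ∧
      (∀ z : Equiv.Perm ℕ,
        (bruhatLEN w z ∧ bruhatLEN z v) ↔
          (z = w ∨ ∃ U : Finset ℕ, U.Nonempty ∧ (∀ a ∈ U, isNbrN w i a) ∧
            z = wUN w i U)) := by
  set φ := (finite_setOf_isNbrN hw i).toFinset
  have hφ : ∀ a, a ∈ φ ↔ isNbrN w i a := fun a => Set.Finite.mem_toFinset _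
  have hφU : ∀ a ∈ φ, isNbrN w i a := fun a ha => (hφ a).1 ha
  refine ⟨wUN w i φ, fun a ha => ?_, fun z hz => ?_, fun z => ?_⟩
  · rw [← wUN_singleton]
    exact bruhatLEN_wUN_wUN hw hφU (singleton_subset_iff.2 ((hφ a).2 ha))
  · obtain ⟨a, ha⟩ := hne
    exact bruhatLEN_wUN_of_forall hw hφU ⟨a, (hφ a).2 ha⟩ fun a ha => hz a ((hφ a).1 ha)
  · rw [bruhatLEN_wUN_iff hw hφU]
    constructor
    · rintro ⟨V, hV, rfl⟩
      rcases V.eq_empty_or_nonempty with rfl | hV₀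
      · exact Or.inl (wUN_empty w i)
      · exact Or.inr ⟨V, hV₀, fun a ha => hφU a (hV ha), rfl⟩
    · rintro (rfl | ⟨V, -, hV, rfl⟩)
      · exact ⟨∅, empty_subset _, (wUN_empty _ _).symm⟩
      · exact ⟨V, fun a ha => (hφ a).2 (hV a ha), rfl⟩
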